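/- arXiv:2603.05814 — 2 statements merged into one kernel-verified Lean document; each statement's English description precedes it below -/
import Mathlib

section
/- (Conjugate Descent sufficient descent) Consider the conjugate gradient iteration in which each t_k satisfies the strong Wolfe conditions at x^k along d^k, and suppose that for every k ≥ 1: β_k ≥ 0 and β_k·ψ_{x^{k−1}}(d^{k−1}) ≥ ψ_{x^k}(v(x^k)) (i.e., β_k is at most the Conjugate Descent parameter β_k^{CD} := ψ_{x^k}(v(x^k)) / ψ_{x^{k−1}}(d^{k−1}), whose denominator is negative). Then for all k ≥ 0, ψ_{x^k}(d^k) ≤ (1−σ)·ψ_{x^k}(v(x^k)) < 0; i.e., the sufficient descent condition holds with c = 1−σ. -/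
/-!
Each component of `ψ_x` is a linear form plus a nonnegatively weighted sum of `|v_j|`, so `ψ_x`
is sublinear: `ψ_x(v + β d) ≤ ψ_x(v) + β ψ_x(d)` for `β ≥ 0`. Along the conjugate gradient
iteration the strong Wolfe condition gives `ψ_{x^{k+1}}(d^k) ≤ -σ ψ_{x^k}(d^k)`, and the bound on
`β_{k+1}` gives `β_{k+1} ψ_{x^k}(d^k) ≥ ψ_{x^{k+1}}(v(x^{k+1}))`; together they yield
`ψ_{x^{k+1}}(d^{k+1}) ≤ (1 - σ) ψ_{x^{k+1}}(v(x^{k+1}))`, and the claim follows by induction,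
the negativity of `ψ_x(v(x))` coming from the minimality of `v(x)` compared with `w = 0`.
-/

open scoped BigOperators

noncomputable def pd (n : ℕ) (F : EuclideanSpace ℝ (Fin n) → ℝ)
    (x : EuclideanSpace ℝ (Fin n)) (j : Fin n) : ℝ :=
  fderiv ℝ F x (EuclideanSpace.single j (1 : ℝ))

noncomputable def glo (n : ℕ) (F H : EuclideanSpace ℝ (Fin n) → ℝ)
    (x : EuclideanSpace ℝ (Fin n)) (j : Fin n) : ℝ :=
  min (pd n F x j) (pd n H x j)

noncomputable def ghi (n : ℕ) (F H : EuclideanSpace ℝ (Fin n) → ℝ)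
    (x : EuclideanSpace ℝ (Fin n)) (j : Fin n) : ℝ :=
  max (pd n F x j) (pd n H x j)

noncomputable def gloVec (n : ℕ) (F H : EuclideanSpace ℝ (Fin n) → ℝ)
    (x : EuclideanSpace ℝ (Fin n)) : EuclideanSpace ℝ (Fin n) :=
  WithLp.toLp 2 (fun j => glo n F H x j)

noncomputable def ghiVec (n : ℕ) (F H : EuclideanSpace ℝ (Fin n) → ℝ)
    (x : EuclideanSpace ℝ (Fin n)) : EuclideanSpace ℝ (Fin n) :=
  WithLp.toLp 2 (fun j => ghi n F H x j)

noncomputable def psi (m n : ℕ) (Gl Gu : Fin m → EuclideanSpace ℝ (Fin n) → ℝ)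
    (x v : EuclideanSpace ℝ (Fin n)) : ℝ :=
  ⨆ i : Fin m, (1 / 2 : ℝ) *
    ((∑ j : Fin n, (glo n (Gl i) (Gu i) x j + ghi n (Gl i) (Gu i) x j) * v j) +
     (∑ j : Fin n, (ghi n (Gl i) (Gu i) x j - glo n (Gl i) (Gu i) x j) * |v j|))

def LevelSet (m n : ℕ) (Gl Gu : Fin m → EuclideanSpace ℝ (Fin n) → ℝ)
    (x0 : EuclideanSpace ℝ (Fin n)) : Set (EuclideanSpace ℝ (Fin n)) :=
  {x | ∀ i : Fin m, Gl i x ≤ Gl i x0 ∧ Gu i x ≤ Gu i x0}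

def StdWolfe (m n : ℕ) (Gl Gu : Fin m → EuclideanSpace ℝ (Fin n) → ℝ)
    (ρ σ : ℝ) (x d : EuclideanSpace ℝ (Fin n)) (t : ℝ) : Prop :=
  (∀ i : Fin m,
      Gl i (x + t • d) ≤ Gl i x + ρ * t * psi m n Gl Gu x d ∧
      Gu i (x + t • d) ≤ Gu i x + ρ * t * psi m n Gl Gu x d) ∧
  σ * psi m n Gl Gu x d ≤ psi m n Gl Gu (x + t • d) d

def StrongWolfe (m n : ℕ) (Gl Gu : Fin m → EuclideanSpace ℝ (Fin n) → ℝ)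
    (ρ σ : ℝ) (x d : EuclideanSpace ℝ (Fin n)) (t : ℝ) : Prop :=
  (∀ i : Fin m,
      Gl i (x + t • d) ≤ Gl i x + ρ * t * psi m n Gl Gu x d ∧
      Gu i (x + t • d) ≤ Gu i x + ρ * t * psi m n Gl Gu x d) ∧
  |psi m n Gl Gu (x + t • d) d| ≤ σ * |psi m n Gl Gu x d|

def AssumptionA1 (m n : ℕ) (Gl Gu : Fin m → EuclideanSpace ℝ (Fin n) → ℝ)
    (x0 : EuclideanSpace ℝ (Fin n)) : Prop :=
  ∀ i : Fin m, ∃ L : ℝ, 0 < L ∧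
    ∀ y ∈ LevelSet m n Gl Gu x0, ∀ z ∈ LevelSet m n Gl Gu x0,
      ‖gloVec n (Gl i) (Gu i) y - gloVec n (Gl i) (Gu i) z‖ ≤ L * ‖y - z‖ ∧
      ‖ghiVec n (Gl i) (Gu i) y - ghiVec n (Gl i) (Gu i) z‖ ≤ L * ‖y - z‖

def AssumptionA2 (m n : ℕ) (Gl Gu : Fin m → EuclideanSpace ℝ (Fin n) → ℝ)
    (x0 : EuclideanSpace ℝ (Fin n)) : Prop :=
  ∀ y : ℕ → EuclideanSpace ℝ (Fin n),
    (∀ k, y k ∈ LevelSet m n Gl Gu x0) →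
    (∀ (i : Fin m) (k : ℕ), Gl i (y (k+1)) ≤ Gl i (y k) ∧ Gu i (y (k+1)) ≤ Gu i (y k)) →
    ∀ i : Fin m, (∃ Cl : ℝ, ∀ k, Cl ≤ Gl i (y k)) ∧ (∃ Cu : ℝ, ∀ k, Cu ≤ Gu i (y k))

open Finset

section Component

variable {ι : Type*} [Fintype ι]

noncomputable def psiComponent (p q : ι → ℝ) (v : EuclideanSpace ℝ ι) : ℝ :=
  (1 / 2 : ℝ) * ((∑ j, (p j + q j) * v j) + ∑ j, (q j - p j) * |v j|)

theorem psiComponent_add_le {p q : ι → ℝ} (hpq : ∀ j, p j ≤ q j) (a c : EuclideanSpace ℝ ι) :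
    psiComponent p q (a + c) ≤ psiComponent p q a + psiComponent p q c := by
  have habs : ∑ j, (q j - p j) * |(a + c) j| ≤
      ∑ j, (q j - p j) * |a j| + ∑ j, (q j - p j) * |c j| := by
    rw [← sum_add_distrib]
    refine sum_le_sum fun j _ => ?_
    rw [← mul_add]
    exact mul_le_mul_of_nonneg_left (abs_add_le (a j) (c j)) (sub_nonneg.2 (hpq j))
  have hlin : ∑ j, (p j + q j) * (a + c) j =
      ∑ j, (p j + q j) * a j + ∑ j, (p j + q j) * c j := by
    simp only [PiLp.add_apply, mul_add, sum_add_distrib]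
  unfold psiComponent
  linarith

theorem psiComponent_smul (p q : ι → ℝ) {β : ℝ} (hβ : 0 ≤ β) (c : EuclideanSpace ℝ ι) :
    psiComponent p q (β • c) = β * psiComponent p q c := by
  have hlin : ∑ j, (p j + q j) * (β * c j) = β * ∑ j, (p j + q j) * c j := by
    rw [mul_sum]
    exact sum_congr rfl fun j _ => by ring
  have habs : ∑ j, (q j - p j) * (β * |c j|) = β * ∑ j, (q j - p j) * |c j| := by
    rw [mul_sum]
    exact sum_congr rfl fun j _ => by ring
  simp only [psiComponent, PiLp.smul_apply, smul_eq_mul, abs_mul, abs_of_nonneg hβ, hlin, habs]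
  ring

end Component

theorem Real.iSup_add_le_iSup_add_iSup {ι : Type*} [Finite ι] (f g : ι → ℝ) :
    ⨆ i, (f i + g i) ≤ (⨆ i, f i) + ⨆ i, g i := by
  rcases isEmpty_or_nonempty ι with hι | hι
  · simp
  exact ciSup_add_le_ciSup_add_ciSup (Finite.bddAbove_range f) (Finite.bddAbove_range g)

section Psi

variable {m n : ℕ} (Gl Gu : Fin m → EuclideanSpace ℝ (Fin n) → ℝ) (x : EuclideanSpace ℝ (Fin n))

theorem psi_eq_iSup_psiComponent (v : EuclideanSpace ℝ (Fin n)) :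
    psi m n Gl Gu x v = ⨆ i, psiComponent (glo n (Gl i) (Gu i) x) (ghi n (Gl i) (Gu i) x) v :=
  rfl

theorem psi_add_le (a c : EuclideanSpace ℝ (Fin n)) :
    psi m n Gl Gu x (a + c) ≤ psi m n Gl Gu x a + psi m n Gl Gu x c := by
  simp only [psi_eq_iSup_psiComponent]
  exact (ciSup_mono (Finite.bddAbove_range _) fun i =>
    psiComponent_add_le (fun _ => min_le_max) a c).trans (Real.iSup_add_le_iSup_add_iSup _ _)

theorem psi_smul {β : ℝ} (hβ : 0 ≤ β) (c : EuclideanSpace ℝ (Fin n)) :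
    psi m n Gl Gu x (β • c) = β * psi m n Gl Gu x c := by
  simp only [psi_eq_iSup_psiComponent, psiComponent_smul _ _ hβ, Real.mul_iSup_of_nonneg hβ]

theorem psi_zero_right : psi m n Gl Gu x 0 = 0 := by
  simpa using psi_smul Gl Gu x le_rfl (0 : EuclideanSpace ℝ (Fin n))

theorem psi_add_smul_le (v d : EuclideanSpace ℝ (Fin n)) {β : ℝ} (hβ : 0 ≤ β) :
    psi m n Gl Gu x (v + β • d) ≤ psi m n Gl Gu x v + β * psi m n Gl Gu x d :=
  (psi_add_le Gl Gu x v (β • d)).trans_eq (by rw [psi_smul Gl Gu x hβ])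

end Psi

theorem neg_of_forall_add_half_sq_le {E : Type*} [NormedAddCommGroup E] {φ : E → ℝ} (hφ : φ 0 = 0)
    {v : E} (hmin : ∀ w, φ v + 1 / 2 * ‖v‖ ^ 2 ≤ φ w + 1 / 2 * ‖w‖ ^ 2) (hv : v ≠ 0) :
    φ v < 0 := by
  have h0 := hmin 0
  have hnorm : 0 < ‖v‖ ^ 2 := by positivity
  rw [hφ, norm_zero] at h0
  linarith

theorem psi_conjugate_direction_le {m n : ℕ} (Gl Gu : Fin m → EuclideanSpace ℝ (Fin n) → ℝ)
    {σ β : ℝ} (hσ : 0 ≤ σ) (hβ : 0 ≤ β) {x x' v d : EuclideanSpace ℝ (Fin n)}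
    (hd : psi m n Gl Gu x d < 0)
    (hwolfe : |psi m n Gl Gu x' d| ≤ σ * |psi m n Gl Gu x d|)
    (hcd : psi m n Gl Gu x' v ≤ β * psi m n Gl Gu x d) :
    psi m n Gl Gu x' (v + β • d) ≤ (1 - σ) * psi m n Gl Gu x' v := by
  have hcurv : psi m n Gl Gu x' d ≤ σ * -psi m n Gl Gu x d := by
    rw [← abs_of_neg hd]
    exact (le_abs_self _).trans hwolfe
  have hscaled := mul_le_mul_of_nonneg_left hcd hσ
  calc psi m n Gl Gu x' (v + β • d)
      ≤ psi m n Gl Gu x' v + β * psi m n Gl Gu x' d := psi_add_smul_le Gl Gu x' v d hβ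
    _ ≤ psi m n Gl Gu x' v + β * (σ * -psi m n Gl Gu x d) := by gcongr
    _ ≤ (1 - σ) * psi m n Gl Gu x' v := by linarith

theorem cd_sufficient_descent_general (m n : ℕ)
    (Gl Gu : Fin m → EuclideanSpace ℝ (Fin n) → ℝ)
    (vv : EuclideanSpace ℝ (Fin n) → EuclideanSpace ℝ (Fin n))
    (hvmin : ∀ y w : EuclideanSpace ℝ (Fin n),
      psi m n Gl Gu y (vv y) + (1/2) * ‖vv y‖^2 ≤ psi m n Gl Gu y w + (1/2) * ‖w‖^2)
    (ρ σ : ℝ) (hρ : 0 < ρ) (hρσ : ρ < σ) (hσ : σ < 1)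
    (x d : ℕ → EuclideanSpace ℝ (Fin n)) (t : ℕ → ℝ) (β : ℕ → ℝ)
    (hx : ∀ k : ℕ, x (k+1) = x k + t k • d k)
    (hd0 : d 0 = vv (x 0))
    (hdk : ∀ k : ℕ, d (k+1) = vv (x (k+1)) + β (k+1) • d k)
    (hvne : ∀ k : ℕ, vv (x k) ≠ 0)
    (hw : ∀ k : ℕ, StrongWolfe m n Gl Gu ρ σ (x k) (d k) (t k))
    (hβ : ∀ k : ℕ, 0 ≤ β (k+1) ∧
      psi m n Gl Gu (x (k+1)) (vv (x (k+1))) ≤ β (k+1) * psi m n Gl Gu (x k) (d k)) :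
    ∀ k : ℕ, psi m n Gl Gu (x k) (d k) ≤ (1 - σ) * psi m n Gl Gu (x k) (vv (x k)) ∧
      (1 - σ) * psi m n Gl Gu (x k) (vv (x k)) < 0 := by
  have hσ0 : 0 < σ := hρ.trans hρσ
  have hv : ∀ k, psi m n Gl Gu (x k) (vv (x k)) < 0 := fun k =>
    neg_of_forall_add_half_sq_le (psi_zero_right Gl Gu (x k)) (hvmin (x k)) (hvne k)
  have hbound : ∀ k, (1 - σ) * psi m n Gl Gu (x k) (vv (x k)) < 0 := fun k =>
    mul_neg_of_pos_of_neg (sub_pos.2 hσ) (hv k)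
  have hdescent : ∀ k, psi m n Gl Gu (x k) (d k) ≤ (1 - σ) * psi m n Gl Gu (x k) (vv (x k)) := by
    intro k
    induction k with
    | zero => rw [hd0]; nlinarith [hv 0]
    | succ k ih =>
      have hwolfe := (hw k).2
      rw [← hx k] at hwolfe
      rw [hdk k]
      exact psi_conjugate_direction_le Gl Gu hσ0.le (hβ k).1 (ih.trans_lt (hbound k))
        hwolfe (hβ k).2
  exact fun k => ⟨hdescent k, hbound k⟩

theorem cd_sufficient_descent (m n : ℕ) (hm : 0 < m) (hn : 0 < n)
    (Gl Gu : Fin m → EuclideanSpace ℝ (Fin n) → ℝ)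
    (hGl : ∀ i, ContDiff ℝ 1 (Gl i)) (hGu : ∀ i, ContDiff ℝ 1 (Gu i))
    (hle : ∀ (i : Fin m) (x : EuclideanSpace ℝ (Fin n)), Gl i x ≤ Gu i x)
    (vv : EuclideanSpace ℝ (Fin n) → EuclideanSpace ℝ (Fin n))
    (hvmin : ∀ y w : EuclideanSpace ℝ (Fin n),
      psi m n Gl Gu y (vv y) + (1/2) * ‖vv y‖^2 ≤ psi m n Gl Gu y w + (1/2) * ‖w‖^2)
    (ρ σ : ℝ) (hρ : 0 < ρ) (hρσ : ρ < σ) (hσ : σ < 1)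
    (x d : ℕ → EuclideanSpace ℝ (Fin n)) (t : ℕ → ℝ) (β : ℕ → ℝ)
    (hx : ∀ k : ℕ, x (k+1) = x k + t k • d k)
    (ht : ∀ k : ℕ, 0 < t k)
    (hd0 : d 0 = vv (x 0))
    (hdk : ∀ k : ℕ, d (k+1) = vv (x (k+1)) + β (k+1) • d k)
    (hvne : ∀ k : ℕ, vv (x k) ≠ 0)
    (hw : ∀ k : ℕ, StrongWolfe m n Gl Gu ρ σ (x k) (d k) (t k))
    (hβ : ∀ k : ℕ, 0 ≤ β (k+1) ∧
      psi m n Gl Gu (x (k+1)) (vv (x (k+1))) ≤ β (k+1) * psi m n Gl Gu (x k) (d k)) :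
    ∀ k : ℕ, psi m n Gl Gu (x k) (d k) ≤ (1 - σ) * psi m n Gl Gu (x k) (vv (x k)) ∧
      (1 - σ) * psi m n Gl Gu (x k) (vv (x k)) < 0 :=
  cd_sufficient_descent_general m n Gl Gu vv hvmin ρ σ hρ hρσ hσ x d t β hx hd0 hdk hvne hw hβ
end

section
/- Suppose the level set L₀ of the initial point x⁰ is bounded (Assumption A3). Then there exists M > 0 such that for every x ∈ L₀, the minimizer v(x) satisfies −M ≤ ψ_x(v(x)) ≤ 0; in particular the values ψ_x(v(x)) are uniformly bounded on L₀. -/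
open scoped BigOperators

/-!
Comparing `v(x)` with `w = 0` gives `ψ_x(v(x)) + ½‖v(x)‖² ≤ ψ_x(0) = 0`. Conversely, the `i`-th term
of `ψ_x` dominates `½ (∇G̲_i(x) + ∇G̅_i(x))ᵀ v`, since `g̲_i + g̅_i = ∇G̲_i + ∇G̅_i` and the `|v|` part
is nonnegative; so `ψ_x(v) ≥ -K(x)‖v‖` with `K(x)` continuous in `x`, hence bounded by some `K` on
the compact closure of `L₀`. These two inequalities force `‖v(x)‖ ≤ 2K` and `ψ_x(v(x)) ≥ -2K²`.
-/
lemma ContinuousLinearMap.sum_apply_single_mul {ι : Type*} [Fintype ι] [DecidableEq ι]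
    (L : EuclideanSpace ℝ ι →L[ℝ] ℝ) (v : EuclideanSpace ℝ ι) :
    ∑ j, L (EuclideanSpace.single j 1) * v j = L v := by
  conv_rhs => rw [← (EuclideanSpace.basisFun ι ℝ).sum_repr v]
  simp [map_sum, mul_comm]

lemma sum_pd_mul_eq_fderiv (n : ℕ) (F : EuclideanSpace ℝ (Fin n) → ℝ)
    (x v : EuclideanSpace ℝ (Fin n)) : ∑ j, pd n F x j * v j = fderiv ℝ F x v :=
  (fderiv ℝ F x).sum_apply_single_mul v

lemma psi_zero (m n : ℕ) [NeZero m] (Gl Gu : Fin m → EuclideanSpace ℝ (Fin n) → ℝ)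
    (x : EuclideanSpace ℝ (Fin n)) : psi m n Gl Gu x 0 = 0 := by
  simp [psi]

lemma half_fderiv_add_le_psi (m n : ℕ) (Gl Gu : Fin m → EuclideanSpace ℝ (Fin n) → ℝ)
    (x v : EuclideanSpace ℝ (Fin n)) (i : Fin m) :
    (fderiv ℝ (Gl i) x v + fderiv ℝ (Gu i) x v) / 2 ≤ psi m n Gl Gu x v := by
  refine le_trans ?_ (le_ciSup (Set.finite_range _).bddAbove i)
  have hmid : ∑ j, (glo n (Gl i) (Gu i) x j + ghi n (Gl i) (Gu i) x j) * v j =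
      fderiv ℝ (Gl i) x v + fderiv ℝ (Gu i) x v := by
    simp only [glo, ghi, min_add_max, add_mul, Finset.sum_add_distrib, sum_pd_mul_eq_fderiv]
  have hspread : 0 ≤ ∑ j, (ghi n (Gl i) (Gu i) x j - glo n (Gl i) (Gu i) x j) * |v j| :=
    Finset.sum_nonneg fun j _ => mul_nonneg (sub_nonneg.mpr min_le_max) (abs_nonneg _)
  rw [hmid]
  linarith

lemma neg_mul_norm_le_psi (m n : ℕ) (Gl Gu : Fin m → EuclideanSpace ℝ (Fin n) → ℝ)
    (x v : EuclideanSpace ℝ (Fin n)) (i : Fin m) :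
    -((‖fderiv ℝ (Gl i) x‖ + ‖fderiv ℝ (Gu i) x‖) / 2 * ‖v‖) ≤ psi m n Gl Gu x v := by
  refine le_trans ?_ (half_fderiv_add_le_psi m n Gl Gu x v i)
  have hl := neg_le_of_abs_le ((fderiv ℝ (Gl i) x).le_opNorm v)
  have hu := neg_le_of_abs_le ((fderiv ℝ (Gu i) x).le_opNorm v)
  linarith

/-- Since `½‖v‖² ≤ -f v ≤ K‖v‖`, the minimizer satisfies `‖v‖ ≤ 2K`. -/
lemma bounds_of_minimizes_add_half_sq_norm {E : Type*} [SeminormedAddCommGroup E]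
    {f : E → ℝ} {v : E} {K : ℝ} (hf0 : f 0 = 0) (hK : -(K * ‖v‖) ≤ f v)
    (hmin : ∀ w, f v + 1 / 2 * ‖v‖ ^ 2 ≤ f w + 1 / 2 * ‖w‖ ^ 2) :
    -(2 * K ^ 2) ≤ f v ∧ f v ≤ 0 := by
  have h0 := hmin 0
  rw [hf0, norm_zero] at h0
  have hv := norm_nonneg v
  constructor
  · nlinarith [sq_nonneg (‖v‖ - 2 * K), sq_nonneg (f v + 2 * K ^ 2)]
  · nlinarith [sq_nonneg ‖v‖]

theorem psi_v_bounded_on_level_set_general (m n : ℕ) (hm : 0 < m)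
    (Gl Gu : Fin m → EuclideanSpace ℝ (Fin n) → ℝ)
    (hGl : ∀ i, ContDiff ℝ 1 (Gl i)) (hGu : ∀ i, ContDiff ℝ 1 (Gu i))
    (vv : EuclideanSpace ℝ (Fin n) → EuclideanSpace ℝ (Fin n))
    (hvmin : ∀ y w : EuclideanSpace ℝ (Fin n),
      psi m n Gl Gu y (vv y) + (1/2) * ‖vv y‖^2 ≤ psi m n Gl Gu y w + (1/2) * ‖w‖^2)
    (x0 : EuclideanSpace ℝ (Fin n))
    (hA3 : Bornology.IsBounded (LevelSet m n Gl Gu x0)) :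
    ∃ M : ℝ, 0 < M ∧ ∀ x ∈ LevelSet m n Gl Gu x0,
      -M ≤ psi m n Gl Gu x (vv x) ∧ psi m n Gl Gu x (vv x) ≤ 0 := by
  have : NeZero m := ⟨hm.ne'⟩
  let i : Fin m := 0
  have hslope : Continuous fun x => (‖fderiv ℝ (Gl i) x‖ + ‖fderiv ℝ (Gu i) x‖) / 2 :=
    ((((hGl i).continuous_fderiv one_ne_zero).norm).add
      ((hGu i).continuous_fderiv one_ne_zero).norm).div_const 2
  obtain ⟨K, hK⟩ := hA3.isCompact_closure.exists_bound_of_continuousOn hslope.continuousOn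
  refine ⟨2 * K ^ 2 + 1, by positivity, fun x hx => ?_⟩
  have hKx : (‖fderiv ℝ (Gl i) x‖ + ‖fderiv ℝ (Gu i) x‖) / 2 ≤ K :=
    (Real.le_norm_self _).trans (hK x (subset_closure hx))
  have hlow : -(K * ‖vv x‖) ≤ psi m n Gl Gu x (vv x) :=
    le_trans (neg_le_neg (mul_le_mul_of_nonneg_right hKx (norm_nonneg _)))
      (neg_mul_norm_le_psi m n Gl Gu x (vv x) i)
  obtain ⟨hlower, hupper⟩ :=
    bounds_of_minimizes_add_half_sq_norm (psi_zero m n Gl Gu x) hlow (hvmin x)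
  exact ⟨by linarith, hupper⟩

theorem psi_v_bounded_on_level_set (m n : ℕ) (hm : 0 < m) (hn : 0 < n)
    (Gl Gu : Fin m → EuclideanSpace ℝ (Fin n) → ℝ)
    (hGl : ∀ i, ContDiff ℝ 1 (Gl i)) (hGu : ∀ i, ContDiff ℝ 1 (Gu i))
    (hle : ∀ (i : Fin m) (x : EuclideanSpace ℝ (Fin n)), Gl i x ≤ Gu i x)
    (vv : EuclideanSpace ℝ (Fin n) → EuclideanSpace ℝ (Fin n))
    (hvmin : ∀ y w : EuclideanSpace ℝ (Fin n),
      psi m n Gl Gu y (vv y) + (1/2) * ‖vv y‖^2 ≤ psi m n Gl Gu y w + (1/2) * ‖w‖^2)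
    (x0 : EuclideanSpace ℝ (Fin n))
    (hA3 : Bornology.IsBounded (LevelSet m n Gl Gu x0)) :
    ∃ M : ℝ, 0 < M ∧ ∀ x ∈ LevelSet m n Gl Gu x0,
      -M ≤ psi m n Gl Gu x (vv x) ∧ psi m n Gl Gu x (vv x) ≤ 0 :=
  psi_v_bounded_on_level_set_general m n hm Gl Gu hGl hGu vv hvmin x0 hA3
end
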